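/- Let p and r be distinct primes and a, t positive integers with (r-1) dividing a. Then r^t divides Ψ_{r^t}(p^a) = (p^{a r^t} - 1)/(p^a - 1). -/

import Mathlib

/-!
Since `r - 1 ∣ a`, Fermat's little theorem gives `p ^ a ≡ 1 [MOD r]`. For any `x ≡ 1 [MOD n]`
the geometric sum `∑_{i < n ^ (t + 1)} x ^ i` factors as `(∑_{i < n ^ t} x ^ i) * ∑_{j < n} y ^ j`
with `y = x ^ n ^ t ≡ 1`, and the second factor is `≡ n ≡ 0 [MOD n]`; induction on `t` gives
`n ^ t ∣ ∑_{i < n ^ t} x ^ i`.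
-/

open Finset

theorem geom_sum_range_mul {R : Type*} [Semiring R] (x : R) (m n : ℕ) :
    ∑ i ∈ range (m * n), x ^ i = (∑ i ∈ range m, x ^ i) * ∑ j ∈ range n, (x ^ m) ^ j := by
  induction n with
  | zero => simp
  | succ n ih =>
    rw [Nat.mul_succ, sum_range_add, ih, sum_range_succ, mul_add]
    congr 1
    rw [sum_mul]
    exact sum_congr rfl fun i _ => by rw [← pow_mul, ← pow_add, Nat.add_comm]

section CommRing

variable {R : Type*} [CommRing R] {n : ℕ} {x : R}

theorem natCast_dvd_geom_sum_of_dvd_sub_one (h : (n : R) ∣ x - 1) :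
    (n : R) ∣ ∑ i ∈ range n, x ^ i := by
  simpa using dvd_geom_sum₂_self (n := n) (y := (1 : R)) h

theorem natCast_pow_dvd_geom_sum_of_dvd_sub_one (h : (n : R) ∣ x - 1) (t : ℕ) :
    (n : R) ^ t ∣ ∑ i ∈ range (n ^ t), x ^ i := by
  induction t with
  | zero => simp
  | succ t ih =>
    rw [pow_succ, pow_succ, geom_sum_range_mul]
    exact mul_dvd_mul ih <|
      natCast_dvd_geom_sum_of_dvd_sub_one (h.trans (sub_one_dvd_pow_sub_one x _))

end CommRing

theorem prime_pow_dvd_psi_prime_pow_general (p r : ℕ) (hp : p.Prime) (hr : r.Prime)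
    (hne : p ≠ r) (a t : ℕ) (hdvd : (r - 1) ∣ a) :
    r ^ t ∣ ∑ i ∈ Finset.range (r ^ t), (p ^ a) ^ i := by
  have hcop : IsCoprime (p : ℤ) r :=
    Nat.isCoprime_iff_coprime.mpr ((Nat.coprime_primes hp hr).mpr hne)
  have hfermat : (r : ℤ) ∣ (p : ℤ) ^ a - 1 := by
    obtain ⟨k, rfl⟩ := hdvd
    rw [pow_mul]
    exact (Int.ModEq.pow_card_sub_one_eq_one hr hcop).symm.dvd.trans
      (sub_one_dvd_pow_sub_one _ _)
  exact_mod_cast natCast_pow_dvd_geom_sum_of_dvd_sub_one hfermat t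

/-- For distinct primes `p ≠ r` and `a, t ≥ 1` with `(r-1) ∣ a`:
`r^t ∣ Ψ_{r^t}(p^a)`. -/
theorem prime_pow_dvd_psi_prime_pow (p r : ℕ) (hp : p.Prime) (hr : r.Prime)
    (hne : p ≠ r) (a t : ℕ) (ha : 0 < a) (ht : 0 < t) (hdvd : (r - 1) ∣ a) :
    r ^ t ∣ ∑ i ∈ Finset.range (r ^ t), (p ^ a) ^ i :=
  prime_pow_dvd_psi_prime_pow_general p r hp hr hne a t hdvd
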